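/- arXiv:2508.17794 — 5 statements merged into one kernel-verified Lean document; each statement's English description precedes it below -/
import Mathlib

section
/- Let T = (t, †, η) be a j-relative monad. T is idempotent if and only if for every object b of A the object t b is η-orthogonal, i.e. for every object a of A and every morphism f : j.obj a ⟶ t b in E there exists a unique morphism h : t a ⟶ t b with h ∘ η_a = f. -/
open CategoryTheory

universe v₁ v₂ u₁ u₂

/-- A `j`-relative monad `T = (t, †, η)`. -/
structure RelativeMonad {A : Type u₁} [Category.{v₁} A] {E : Type u₂} [Category.{v₂} E]
    (j : A ⥤ E) where
  /-- The underlying object assignment. -/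
  t : A → E
  /-- The unit. -/
  unit : ∀ a : A, j.obj a ⟶ t a
  /-- The extension operator `f ↦ f†`. -/
  ext : ∀ (a b : A), (j.obj a ⟶ t b) → (t a ⟶ t b)
  unit_ext : ∀ {a b : A} (f : j.obj a ⟶ t b), unit a ≫ ext a b f = f
  ext_unit : ∀ a : A, ext a a (unit a) = 𝟙 (t a)
  ext_ext : ∀ {a b c : A} (f : j.obj a ⟶ t b) (g : j.obj b ⟶ t c),
    ext a c (f ≫ ext b c g) = ext a b f ≫ ext b c g

variable {A : Type u₁} [Category.{v₁} A] {E : Type u₂} [Category.{v₂} E] {j : A ⥤ E}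

/-- A relative monad is idempotent iff each `t b` is `η`-orthogonal: every
`f : j a ⟶ t b` admits a unique extension along `η_a`. -/
theorem relativeMonad_idempotent_iff_orthogonal (T : RelativeMonad j) :
    (∀ a b : A, Function.Bijective (T.ext a b)) ↔
      (∀ (b a : A) (f : j.obj a ⟶ T.t b), ∃! h : T.t a ⟶ T.t b, T.unit a ≫ h = f) := by
  constructor
  · intro H b a f
    refine ⟨T.ext a b f, T.unit_ext f, fun h hh => ?_⟩
    obtain ⟨g, rfl⟩ := (H a b).2 h
    rw [T.unit_ext] at hh
    rw [hh]
  · intro H a b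
    constructor
    · intro f f' hff
      rw [← T.unit_ext f, ← T.unit_ext f', hff]
    · intro h
      refine ⟨T.unit a ≫ h, ?_⟩
      exact ((H b a (T.unit a ≫ h)).unique (T.unit_ext _) rfl)
end

section
/- Let T = (t, μ, η) be a monad on a category E. The multiplication μ is an isomorphism if and only if T is idempotent as a monad relative to the identity functor on E, i.e. if and only if for all objects a, b of E and every morphism g : t.obj a ⟶ t.obj b one has μ_b ∘ t.map (g ∘ η_a) = g. -/
open CategoryTheory

universe v u

/-- A monad is idempotent (its multiplication is invertible) iff it is idempotent as a
monad relative to the identity functor: `μ_b ∘ t.map (g ∘ η_a) = g` for every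
`g : t.obj a ⟶ t.obj b`. -/
theorem monad_mu_isIso_iff_idempotent_as_relative_monad {E : Type u} [Category.{v} E]
    (T : Monad E) :
    IsIso T.μ ↔
      ∀ (a b : E) (g : T.obj a ⟶ T.obj b), T.map (T.η.app a ≫ g) ≫ T.μ.app b = g := by
  constructor
  · intro h a b g
    -- μ.app a is iso; both T.map (η.app a) and η.app (T.obj a) are sections, hence equal
    have ha : IsIso (T.μ.app a) := inferInstance
    have key : T.map (T.η.app a) = T.η.app (T.obj a) := by
      have h1 : T.map (T.η.app a) ≫ T.μ.app a = 𝟙 _ := T.right_unit a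
      have h2 : T.η.app (T.obj a) ≫ T.μ.app a = 𝟙 _ := T.left_unit a
      exact (cancel_mono (T.μ.app a)).mp (h1.trans h2.symm)
    rw [Functor.map_comp, key, Category.assoc, ← T.η.naturality_assoc g]
    simp
  · intro h
    have : ∀ a : E, IsIso (T.μ.app a) := by
      intro a
      refine ⟨T.η.app (T.obj a), ?_, T.left_unit a⟩
      have := h (T.obj a) (T.obj a) (T.μ.app a ≫ T.η.app (T.obj a))
      have h2 := h (T.obj a) (T.obj a) (𝟙 _)
      have heq : T.η.app (T.obj a) ≫ T.μ.app a ≫ T.η.app (T.obj a) =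
          T.η.app (T.obj a) ≫ 𝟙 _ := by
        rw [← Category.assoc, T.left_unit a]; simp
      calc T.μ.app a ≫ T.η.app (T.obj a)
          = T.map (T.η.app (T.obj a) ≫ T.μ.app a ≫ T.η.app (T.obj a)) ≫
              T.μ.app (T.obj a) := (this).symm
        _ = T.map (T.η.app (T.obj a) ≫ 𝟙 _) ≫ T.μ.app (T.obj a) := by rw [heq]
        _ = 𝟙 _ := h2
    exact NatIso.isIso_of_isIso_app T.μ
end

section
/- Let T = (t, †, η) be a j-relative monad. Then T is idempotent if and only if T admits a j-reflective resolution: that is, if and only if there exist a category C, functors ℓ : A ⥤ C and r : C ⥤ E with r fully faithful, and bijections φ_{a,c} : Hom_C(ℓ.obj a, c) ≃ Hom_E(j.obj a, r.obj c) natural in a and c, such that r.obj (ℓ.obj a) = t a for all a, φ(1_{ℓ.obj a}) = η_a, and r.map (φ⁻¹ f) = f† for every f : j.obj a ⟶ t b. Moreover, when T is idempotent such a resolution is given by the Kleisli category of T. -/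
/-!
In the Kleisli resolution the right adjoint acts on morphisms by `f ↦ f†`, so it is fully
faithful exactly when `T` is idempotent. Conversely, in any resolution, `f ↦ f†` agrees, up to
the identifications `r (ℓ a) = t a`, with `φ⁻¹` followed by `r.map`; both are bijections when
`r` is fully faithful.
-/

open CategoryTheory

universe v₁ v₂ u₁ u₂

variable {A : Type u₁} [Category.{v₁} A] {E : Type u₂} [Category.{v₂} E] {j : A ⥤ E}

/-- The Kleisli category of a `j`-relative monad: objects are those of `A`, and
morphisms `a ⟶ b` are morphisms `j a ⟶ t b` in `E`. -/
def RelativeMonad.Kl (_ : RelativeMonad j) : Type u₁ := A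

instance (T : RelativeMonad j) : Category.{v₂} T.Kl where
  Hom a b := j.obj a ⟶ T.t b
  id a := T.unit a
  comp {a b c} f g := f ≫ T.ext b c g
  id_comp {a b} f := T.unit_ext f
  comp_id {a b} f := by
    change f ≫ T.ext b b (T.unit b) = f
    exact (congrArg (fun x => f ≫ x) (T.ext_unit b)).trans (Category.comp_id f)
  assoc {a b c d} f g h := by
    change (f ≫ T.ext b c g) ≫ T.ext c d h = f ≫ T.ext b d (g ≫ T.ext c d h)
    exact (Category.assoc _ _ _).trans (congrArg (fun x => f ≫ x) (T.ext_ext g h).symm)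

/-- The hom-map of the left adjoint `k_T : A ⥤ Kl(T)`. -/
def RelativeMonad.kTmap (T : RelativeMonad j) {a b : A} (f : a ⟶ b) :
    j.obj a ⟶ T.t b :=
  j.map f ≫ T.unit b

/-- The left adjoint `k_T : A ⥤ Kl(T)`, the identity on objects. -/
def RelativeMonad.kT (T : RelativeMonad j) : A ⥤ T.Kl where
  obj a := a
  map {a b} f := T.kTmap f
  map_id a := by
    show j.map (𝟙 a) ≫ T.unit a = T.unit a
    rw [j.map_id, Category.id_comp]
  map_comp {a b c} f g := by
    show j.map (f ≫ g) ≫ T.unit c =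
      (j.map f ≫ T.unit b) ≫ T.ext b c (j.map g ≫ T.unit c)
    rw [Category.assoc, T.unit_ext, j.map_comp, Category.assoc]

/-- The right adjoint `v_T : Kl(T) ⥤ E`, sending `a` to `t a` and `f` to `f†`. -/
def RelativeMonad.vT (T : RelativeMonad j) : T.Kl ⥤ E where
  obj a := T.t a
  map {a b} f := T.ext a b f
  map_id a := T.ext_unit a
  map_comp {a b c} f g := T.ext_ext f g

/-- The hom-bijection `Kl(T)(k_T a, c) ≃ E(j a, v_T c)` of the Kleisli relative
adjunction, which is an identity. -/
def RelativeMonad.klEquiv (T : RelativeMonad j) (a : A) (c : T.Kl) :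
    (T.kT.obj a ⟶ c) ≃ (j.obj a ⟶ T.vT.obj c) :=
  Equiv.refl _

namespace RelativeMonad

theorem klEquiv_kT_map_comp (T : RelativeMonad j) {a a' : A} (u : a ⟶ a') {c : T.Kl}
    (g : T.kT.obj a' ⟶ c) :
    T.klEquiv a c (T.kT.map u ≫ g) = j.map u ≫ T.klEquiv a' c g :=
  (Category.assoc _ _ _).trans (congrArg (j.map u ≫ ·) (T.unit_ext g))

theorem ext_bijective_of_map_bijective (T : RelativeMonad j) {C : Type*} [Category C]
    (r : C ⥤ E) {a b : A} {x y : C} (φ : (x ⟶ y) ≃ (j.obj a ⟶ r.obj y))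
    (hx : r.obj x = T.t a) (hy : r.obj y = T.t b)
    (hr : Function.Bijective (fun g : x ⟶ y => r.map g))
    (hφ : ∀ f : j.obj a ⟶ T.t b,
      r.map (φ.symm (f ≫ eqToHom hy.symm)) = eqToHom hx ≫ T.ext a b f ≫ eqToHom hy.symm) :
    Function.Bijective (T.ext a b) := by
  let transport := (eqToIso hx.symm).homCongr (eqToIso hy.symm)
  have hfactor : transport ∘ T.ext a b =
      (fun g : x ⟶ y => r.map g) ∘ φ.symm ∘ (Iso.refl (j.obj a)).homCongr (eqToIso hy.symm) := by
    funext f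
    simp [transport, hφ]
  rw [← Equiv.comp_bijective _ transport, hfactor]
  exact hr.comp (φ.symm.bijective.comp (Equiv.bijective _))

end RelativeMonad

/-- A `j`-relative monad `T` is idempotent if and only if it admits a `j`-reflective
resolution: a `j`-relative adjunction `ℓ ⊣_j r` with `r` fully faithful inducing `T`
(meaning `r (ℓ a) = t a`, `φ (1) = η`, and `r.map (φ⁻¹ f) = f†`).  Moreover, when `T`
is idempotent, such a resolution is given by the Kleisli category of `T`. -/
theorem relativeMonad_idempotent_iff_jReflective_resolution (T : RelativeMonad j) :
    ((∀ a b : A, Function.Bijective (T.ext a b)) ↔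
      ∃ (C : Type u₁) (_ : Category.{v₂} C) (ℓ : A ⥤ C) (r : C ⥤ E)
        (φ : ∀ (a : A) (c : C), (ℓ.obj a ⟶ c) ≃ (j.obj a ⟶ r.obj c))
        (ht : ∀ a : A, r.obj (ℓ.obj a) = T.t a),
        (∀ c c' : C, Function.Bijective (fun g : c ⟶ c' => r.map g)) ∧
        (∀ {a a' : A} (u : a ⟶ a') {c : C} (g : ℓ.obj a' ⟶ c),
          φ a c (ℓ.map u ≫ g) = j.map u ≫ φ a' c g) ∧
        (∀ {a : A} {c c' : C} (g : ℓ.obj a ⟶ c) (v : c ⟶ c'),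
          φ a c' (g ≫ v) = φ a c g ≫ r.map v) ∧
        (∀ a : A, φ a (ℓ.obj a) (𝟙 (ℓ.obj a)) = T.unit a ≫ eqToHom (ht a).symm) ∧
        (∀ {a b : A} (f : j.obj a ⟶ T.t b),
          r.map ((φ a (ℓ.obj b)).symm (f ≫ eqToHom (ht b).symm)) =
            eqToHom (ht a) ≫ T.ext a b f ≫ eqToHom (ht b).symm)) ∧
    ((∀ a b : A, Function.Bijective (T.ext a b)) →
      (∀ c c' : T.Kl, Function.Bijective (fun g : c ⟶ c' => T.vT.map g)) ∧
      (∀ {a a' : A} (u : a ⟶ a') {c : T.Kl} (g : T.kT.obj a' ⟶ c),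
        T.klEquiv a c (T.kT.map u ≫ g) = j.map u ≫ T.klEquiv a' c g) ∧
      (∀ {a : A} {c c' : T.Kl} (g : T.kT.obj a ⟶ c) (v : c ⟶ c'),
        T.klEquiv a c' (g ≫ v) = T.klEquiv a c g ≫ T.vT.map v) ∧
      (∀ a : A, T.klEquiv a (T.kT.obj a) (𝟙 (T.kT.obj a)) = T.unit a) ∧
      (∀ {a b : A} (f : j.obj a ⟶ T.t b),
        T.vT.map ((T.klEquiv a (T.kT.obj b)).symm f) = T.ext a b f)) := by
  refine ⟨⟨fun h => ?_, ?_⟩,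
    fun h => ⟨h, T.klEquiv_kT_map_comp, fun _ _ => rfl, fun _ => rfl, fun _ => rfl⟩⟩
  · refine ⟨T.Kl, inferInstance, T.kT, T.vT, T.klEquiv, fun _ => rfl, h,
      T.klEquiv_kT_map_comp, fun _ _ => rfl, fun _ => (Category.comp_id _).symm, fun f => ?_⟩
    show T.ext _ _ (f ≫ 𝟙 _) = 𝟙 _ ≫ T.ext _ _ f ≫ 𝟙 _
    simp only [Category.comp_id, Category.id_comp]
  · rintro ⟨C, _, ℓ, r, φ, ht, hr, -, -, -, hφ⟩ a b
    exact T.ext_bijective_of_map_bijective r (φ a (ℓ.obj b)) (ht a) (ht b) (hr _ _) hφ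
end

section
/- Let T = (t, †, η) be a j-relative monad and (e', ⋊') a T-algebra. Then (e', ⋊') is idempotent if and only if for every T-algebra (e, ⋊), every morphism ε : e ⟶ e' in E is a T-algebra morphism, i.e. ε ∘ f⋊ = (ε ∘ f)⋊' for every morphism f : j.obj a ⟶ e. -/
open CategoryTheory

universe v₁ v₂ u₁ u₂

variable {A : Type u₁} [Category.{v₁} A] {E : Type u₂} [Category.{v₂} E] {j : A ⥤ E}

/-- An algebra `(e, ⋊)` for a `j`-relative monad `T`. -/
structure RelativeMonad.Algebra (T : RelativeMonad j) where
  /-- The carrier object. -/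
  carrier : E
  /-- The extension operator `f ↦ f⋊`. -/
  ext : ∀ a : A, (j.obj a ⟶ carrier) → (T.t a ⟶ carrier)
  unit_ext : ∀ {a : A} (f : j.obj a ⟶ carrier), T.unit a ≫ ext a f = f
  ext_ext : ∀ {a b : A} (f : j.obj a ⟶ T.t b) (g : j.obj b ⟶ carrier),
    ext a (f ≫ ext b g) = T.ext a b f ≫ ext b g

/-- A `T`-algebra `(e', ⋊')` is idempotent iff every morphism in `E` from the carrier
of any `T`-algebra to `e'` is a `T`-algebra morphism. -/
theorem relativeMonad_algebra_idempotent_iff_every_morphism_is_algebra_morphism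
    (T : RelativeMonad j) (X' : T.Algebra) :
    (∀ a : A, Function.Bijective (X'.ext a)) ↔
      (∀ (X : T.Algebra) (ε : X.carrier ⟶ X'.carrier) {a : A}
        (f : j.obj a ⟶ X.carrier), X.ext a f ≫ ε = X'.ext a (f ≫ ε)) := by
  constructor
  · intro hbij X ε a f
    -- every h : T.t a ⟶ X'.carrier equals X'.ext a (unit ≫ h)
    have key : ∀ (h : T.t a ⟶ X'.carrier), X'.ext a (T.unit a ≫ h) = h := by
      intro h
      obtain ⟨g, hg⟩ := (hbij a).2 h
      rw [← hg, X'.unit_ext]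
    calc X.ext a f ≫ ε = X'.ext a (T.unit a ≫ X.ext a f ≫ ε) := (key _).symm
      _ = X'.ext a (f ≫ ε) := by rw [← Category.assoc, X.unit_ext]
  · intro H a
    constructor
    · intro f g hfg
      have := congrArg (fun k => T.unit a ≫ k) hfg
      simpa [X'.unit_ext] using this
    · intro h
      refine ⟨T.unit a ≫ h, ?_⟩
      have := H ⟨T.t a, fun b f => T.ext b a f, fun {b} f => T.unit_ext f,
        fun {b c} f g => T.ext_ext f g⟩ h (T.unit a)
      simpa [T.ext_unit] using this.symm
end

section
/- Let T = (t, †, η) be a j-relative monad. Then every T-algebra is idempotent (T is algebraically idempotent) if and only if the forgetful functor from T-algebras to E is full, i.e. for all T-algebras (e, ⋊) and (e', ⋊'), every morphism ε : e ⟶ e' in E satisfies ε ∘ f⋊ = (ε ∘ f)⋊' for every f : j.obj a ⟶ e. -/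
open CategoryTheory

universe v₁ v₂ u₁ u₂

variable {A : Type u₁} [Category.{v₁} A] {E : Type u₂} [Category.{v₂} E] {j : A ⥤ E}

/-- A relative monad is algebraically idempotent (every algebra is idempotent) iff the
forgetful functor from `T`-algebras to `E` is full: every morphism of `E` between
carriers of algebras is an algebra morphism. -/
theorem relativeMonad_algebraically_idempotent_iff_forgetful_full (T : RelativeMonad j) :
    (∀ (X : T.Algebra) (a : A), Function.Bijective (X.ext a)) ↔
      (∀ (X X' : T.Algebra) (ε : X.carrier ⟶ X'.carrier) {a : A}
        (f : j.obj a ⟶ X.carrier), X.ext a f ≫ ε = X'.ext a (f ≫ ε)) := by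
  constructor
  · intro h X X' ε a f
    obtain ⟨g, hg⟩ := (h X' a).2 (X.ext a f ≫ ε)
    have : g = f ≫ ε := by
      have := congrArg (T.unit a ≫ ·) hg
      simpa [X'.unit_ext, ← Category.assoc, X.unit_ext] using this
    rw [← hg, this]
  · intro h X a
    constructor
    · intro f g hfg
      have := congrArg (T.unit a ≫ ·) hfg
      simpa [X.unit_ext] using this
    · intro m
      refine ⟨T.unit a ≫ m, ?_⟩
      have := h ⟨T.t a, fun b g => T.ext b a g, T.unit_ext, T.ext_ext⟩ X m (T.unit a)
      simpa [T.ext_unit] using this.symm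
end
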